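/- (Equivalence of ℓ1 trend filtering with LASSO after concentrating out the affine part, Lemma 2.) Let P = g₁(g₁ᵀg₁)⁻¹g₁ᵀ be the orthogonal projection onto the column space of g₁ (assumed full column rank), set ỹ = (I−P)y and X̃ = (I−P)G₂. If θ̂ minimizes ‖ỹ − X̃θ‖₂² + λ‖θ‖₁ over θ ∈ ℝ^{T−2}, then f̃ := y − ỹ + X̃θ̂ minimizes ‖y − f‖₂² + λ‖Df‖₁ over f ∈ ℝ^T. -/
import Mathlib


open Matrix

/-- Equivalence of ℓ1 trend filtering with LASSO after concentrating out the
affine part (Lemma 2). -/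
theorem l1_filter_lasso_equivalence
    (T : ℕ) (hT : 3 ≤ T) (y : Fin T → ℝ) (lam : ℝ) (hlam : 0 ≤ lam)
    (D : Matrix (Fin (T - 2)) (Fin T) ℝ)
    (hD : ∀ i j, D i j =
      if j.1 = i.1 then 1 else if j.1 = i.1 + 1 then -2 else
        if j.1 = i.1 + 2 then 1 else 0)
    (D1 : Matrix (Fin 2) (Fin T) ℝ)
    (hD1 : ∀ i j, D1 i j = if j.1 = T - 2 + i.1 then 1 else 0)
    (Dbar : Matrix (Fin T) (Fin T) ℝ)
    (hDbar : ∀ k j, Dbar k j =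
      if h : k.1 < T - 2 then D ⟨k.1, h⟩ j
      else D1 ⟨k.1 - (T - 2), by have := k.isLt; omega⟩ j)
    (hinv : IsUnit Dbar)
    (G2 : Matrix (Fin T) (Fin (T - 2)) ℝ)
    (hG2 : ∀ i j, G2 i j = Dbar⁻¹ i ⟨j.1, by have := j.isLt; omega⟩)
    (g1 : Matrix (Fin T) (Fin 2) ℝ)
    (hg1 : ∀ i j, g1 i j = Dbar⁻¹ i ⟨T - 2 + j.1, by have := j.isLt; omega⟩)
    (hrank : IsUnit (g1.transpose * g1))
    (P : Matrix (Fin T) (Fin T) ℝ)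
    (hP : P = g1 * (g1.transpose * g1)⁻¹ * g1.transpose)
    (ytil : Fin T → ℝ) (hytil : ytil = y - P.mulVec y)
    (Xtil : Matrix (Fin T) (Fin (T - 2)) ℝ) (hXtil : Xtil = G2 - P * G2)
    (θhat : Fin (T - 2) → ℝ)
    (hθhat : ∀ θ : Fin (T - 2) → ℝ,
      ∑ i, (ytil i - Xtil.mulVec θhat i) ^ 2 + lam * ∑ j, |θhat j|
        ≤ ∑ i, (ytil i - Xtil.mulVec θ i) ^ 2 + lam * ∑ j, |θ j|) :
    ∀ f : Fin T → ℝ,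
      ∑ i, (y i - (y - ytil + Xtil.mulVec θhat) i) ^ 2
          + lam * ∑ j, |D.mulVec (y - ytil + Xtil.mulVec θhat) j|
        ≤ ∑ i, (y i - f i) ^ 2 + lam * ∑ j, |D.mulVec f j| := by
  -- basic invertibility facts
  have hdet : IsUnit (g1.transpose * g1).det :=
    (Matrix.isUnit_iff_isUnit_det _).mp hrank
  have hMr : (g1.transpose * g1)⁻¹ * (g1.transpose * g1) = 1 :=
    Matrix.nonsing_inv_mul _ hdet
  have hPg1 : P * g1 = g1 := by
    have h1 : P * g1 = g1 * ((g1.transpose * g1)⁻¹ * (g1.transpose * g1)) := by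
      rw [hP, Matrix.mul_assoc, Matrix.mul_assoc]
    rw [h1, hMr, Matrix.mul_one]
  have hMt : ((g1.transpose * g1)⁻¹).transpose = (g1.transpose * g1)⁻¹ := by
    rw [Matrix.transpose_nonsing_inv, Matrix.transpose_mul,
      Matrix.transpose_transpose]
  have hPt : P.transpose = P := by
    rw [hP, Matrix.transpose_mul, Matrix.transpose_mul, Matrix.transpose_transpose,
      hMt, Matrix.mul_assoc]
  have hg1tP : g1.transpose * P = g1.transpose := by
    have h := congrArg Matrix.transpose hPg1
    rw [Matrix.transpose_mul, hPt] at h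
    exact h
  have hPP : P * P = P := by
    calc P * P = g1 * (g1.transpose * g1)⁻¹ * (g1.transpose * P) := by
          rw [hP, Matrix.mul_assoc]
    _ = P := by rw [hg1tP, ← hP]
  -- P is symmetric for the inner product
  have hsym : ∀ v w : Fin T → ℝ, v ⬝ᵥ (P *ᵥ w) = (P *ᵥ v) ⬝ᵥ w := by
    intro v w
    rw [Matrix.dotProduct_mulVec]
    conv_lhs => rw [← hPt]
    rw [Matrix.vecMul_transpose]
  -- Pythagoras
  have key : ∀ u : Fin T → ℝ, ∑ i, (u i - (P *ᵥ u) i) ^ 2 ≤ ∑ i, (u i) ^ 2 := by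
    intro u
    have hPu : P *ᵥ (P *ᵥ u) = P *ᵥ u := by rw [Matrix.mulVec_mulVec, hPP]
    have h1 : u ⬝ᵥ (P *ᵥ u) = (P *ᵥ u) ⬝ᵥ (P *ᵥ u) := by
      conv_lhs => rw [← hPu]
      rw [hsym]
    have hd : ∀ w : Fin T → ℝ, ∑ i, (w i) ^ 2 = w ⬝ᵥ w := by
      intro w; simp [dotProduct, sq]
    have hnn : 0 ≤ (P *ᵥ u) ⬝ᵥ (P *ᵥ u) :=
      Finset.sum_nonneg fun i _ => mul_self_nonneg _
    have hexp : (u - P *ᵥ u) ⬝ᵥ (u - P *ᵥ u) = u ⬝ᵥ u - (P *ᵥ u) ⬝ᵥ (P *ᵥ u) := by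
      rw [sub_dotProduct, dotProduct_sub, dotProduct_sub,
        dotProduct_comm (P *ᵥ u) u, h1]
      ring
    have hls : ∑ i, (u i - (P *ᵥ u) i) ^ 2 = (u - P *ᵥ u) ⬝ᵥ (u - P *ᵥ u) := by
      simp [dotProduct, sq]
    rw [hls, hexp, hd u]
    linarith
  -- block identities
  have hdet2 : IsUnit Dbar.det := (Matrix.isUnit_iff_isUnit_det _).mp hinv
  have hDbarL : Dbar⁻¹ * Dbar = 1 := Matrix.nonsing_inv_mul _ hdet2
  have hDbarR : Dbar * Dbar⁻¹ = 1 := Matrix.mul_nonsing_inv _ hdet2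
  have hrow : ∀ (i : Fin (T - 2)) (k : Fin T), Dbar ⟨i.1, by omega⟩ k = D i k := by
    intro i k
    rw [hDbar]
    rw [dif_pos (show (⟨i.1, by omega⟩ : Fin T).1 < T - 2 from i.isLt)]
  have hDG2 : D * G2 = 1 := by
    ext i j
    have h1 : (D * G2) i j = (Dbar * Dbar⁻¹) ⟨i.1, by omega⟩ ⟨j.1, by omega⟩ := by
      simp only [Matrix.mul_apply]
      refine Finset.sum_congr rfl fun k _ => ?_
      rw [hrow i k, hG2]
    rw [h1, hDbarR]
    simp only [Matrix.one_apply, Fin.mk.injEq, Fin.ext_iff]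
  have hDg1 : D * g1 = 0 := by
    ext i j
    have h1 : (D * g1) i j = (Dbar * Dbar⁻¹) ⟨i.1, by omega⟩ ⟨T - 2 + j.1, by omega⟩ := by
      simp only [Matrix.mul_apply]
      refine Finset.sum_congr rfl fun k _ => ?_
      rw [hrow i k, hg1]
    rw [h1, hDbarR]
    have : (⟨i.1, by omega⟩ : Fin T) ≠ ⟨T - 2 + j.1, by omega⟩ := by
      simp only [ne_eq, Fin.mk.injEq]
      omega
    simp [Matrix.one_apply, this]
  have hDP : D * P = 0 := by
    rw [hP, ← Matrix.mul_assoc, ← Matrix.mul_assoc, hDg1, Matrix.zero_mul,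
      Matrix.zero_mul]
  have hDPv : ∀ v : Fin T → ℝ, D *ᵥ (P *ᵥ v) = 0 := by
    intro v; rw [Matrix.mulVec_mulVec, hDP, Matrix.zero_mulVec]
  have hPg1v : ∀ v : Fin 2 → ℝ, P *ᵥ (g1 *ᵥ v) = g1 *ᵥ v := by
    intro v; rw [Matrix.mulVec_mulVec, hPg1]
  -- decomposition of an arbitrary f
  have hdecomp : ∀ v : Fin T → ℝ, ∃ α : Fin 2 → ℝ,
      v = G2 *ᵥ (D *ᵥ v) + g1 *ᵥ α := by
    intro v
    set w := Dbar *ᵥ v with hw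
    refine ⟨fun j => w ⟨T - 2 + j.1, by omega⟩, ?_⟩
    have hv : Dbar⁻¹ *ᵥ w = v := by
      rw [hw, Matrix.mulVec_mulVec, hDbarL, Matrix.one_mulVec]
    have hθ : ∀ j : Fin (T - 2), (D *ᵥ v) j = w ⟨j.1, by omega⟩ := by
      intro j
      simp only [hw, Matrix.mulVec, dotProduct]
      exact Finset.sum_congr rfl fun k _ => by rw [hrow j k]
    funext i
    let e : Fin (T - 2) ⊕ Fin 2 ≃ Fin T :=
      finSumFinEquiv.trans (finCongr (by omega : T - 2 + 2 = T))
    have hel : ∀ j : Fin (T - 2), e (Sum.inl j) = (⟨j.1, by omega⟩ : Fin T) := by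
      intro j
      apply Fin.ext
      simp [e, finSumFinEquiv_apply_left]
    have her : ∀ j : Fin 2, e (Sum.inr j) = (⟨T - 2 + j.1, by omega⟩ : Fin T) := by
      intro j
      apply Fin.ext
      simp [e, finSumFinEquiv_apply_right]
    have hsplit : (Dbar⁻¹ *ᵥ w) i =
        ∑ j : Fin (T - 2), Dbar⁻¹ i ⟨j.1, by omega⟩ * w ⟨j.1, by omega⟩
        + ∑ j : Fin 2, Dbar⁻¹ i ⟨T - 2 + j.1, by omega⟩ * w ⟨T - 2 + j.1, by omega⟩ := by
      have h1 : (Dbar⁻¹ *ᵥ w) i = ∑ k : Fin T, Dbar⁻¹ i k * w k := rfl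
      rw [h1, ← Equiv.sum_comp e (fun k => Dbar⁻¹ i k * w k), Fintype.sum_sum_type]
      simp only [hel, her]
    have hG2v : (G2 *ᵥ (D *ᵥ v)) i
        = ∑ j : Fin (T - 2), Dbar⁻¹ i ⟨j.1, by omega⟩ * w ⟨j.1, by omega⟩ := by
      have h1 : (G2 *ᵥ (D *ᵥ v)) i = ∑ j, G2 i j * (D *ᵥ v) j := rfl
      rw [h1]
      exact Finset.sum_congr rfl fun j _ => by rw [hG2, hθ j]
    have hg1v : (g1 *ᵥ fun j => w ⟨T - 2 + j.1, by omega⟩) i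
        = ∑ j : Fin 2, Dbar⁻¹ i ⟨T - 2 + j.1, by omega⟩ * w ⟨T - 2 + j.1, by omega⟩ := by
      have h1 : (g1 *ᵥ fun j => w ⟨T - 2 + j.1, by omega⟩) i
          = ∑ j, g1 i j * w ⟨T - 2 + j.1, by omega⟩ := rfl
      rw [h1]
      exact Finset.sum_congr rfl fun j _ => by rw [hg1]
    calc v i = (Dbar⁻¹ *ᵥ w) i := by rw [hv]
      _ = _ := hsplit
      _ = (G2 *ᵥ (D *ᵥ v)) i + (g1 *ᵥ fun j => w ⟨T - 2 + j.1, by omega⟩) i := by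
          rw [hG2v, hg1v]
  -- residual identity
  have hres : ∀ (θ : Fin (T - 2) → ℝ) (α : Fin 2 → ℝ) (i : Fin T),
      ytil i - (Xtil *ᵥ θ) i =
        (y - G2 *ᵥ θ - g1 *ᵥ α) i - (P *ᵥ (y - G2 *ᵥ θ - g1 *ᵥ α)) i := by
    intro θ α i
    have h1 : P *ᵥ (y - G2 *ᵥ θ - g1 *ᵥ α)
        = P *ᵥ y - P *ᵥ (G2 *ᵥ θ) - g1 *ᵥ α := by
      rw [Matrix.mulVec_sub, Matrix.mulVec_sub, hPg1v]
    rw [h1, hytil, hXtil, Matrix.sub_mulVec, Matrix.mulVec_mulVec]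
    simp only [Pi.sub_apply]
    ring
  -- the D-image of the candidate
  have hDftil : D *ᵥ (y - ytil + Xtil *ᵥ θhat) = θhat := by
    have h0 : y - ytil + Xtil *ᵥ θhat
        = P *ᵥ y + (G2 *ᵥ θhat - P *ᵥ (G2 *ᵥ θhat)) := by
      rw [hytil, hXtil, Matrix.sub_mulVec, Matrix.mulVec_mulVec]
      funext i
      simp only [Pi.add_apply, Pi.sub_apply]
      ring
    rw [h0, Matrix.mulVec_add, Matrix.mulVec_sub, hDPv, hDPv, Matrix.mulVec_mulVec,
      hDG2, Matrix.one_mulVec]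
    simp
  -- main argument
  intro f
  obtain ⟨α, hfdec⟩ := hdecomp f
  set θ := D *ᵥ f with hθdef
  have step1 :
      ∑ i, (y i - (y - ytil + Xtil.mulVec θhat) i) ^ 2
          + lam * ∑ j, |D.mulVec (y - ytil + Xtil.mulVec θhat) j|
      = ∑ i, (ytil i - Xtil.mulVec θhat i) ^ 2 + lam * ∑ j, |θhat j| := by
    rw [hDftil]
    congr 1
    refine Finset.sum_congr rfl fun i _ => ?_
    simp only [Pi.add_apply, Pi.sub_apply]
    ring
  have step2 :
      ∑ i, (ytil i - Xtil.mulVec θ i) ^ 2 ≤ ∑ i, (y i - f i) ^ 2 := by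
    set u : Fin T → ℝ := y - G2 *ᵥ θ - g1 *ᵥ α with hu
    have h1 : ∀ i, ytil i - Xtil.mulVec θ i = u i - (P *ᵥ u) i := hres θ α
    have h2 : ∀ i, y i - f i = u i := by
      intro i
      rw [hfdec]
      simp only [hu, Pi.sub_apply, Pi.add_apply]
      ring
    calc ∑ i, (ytil i - Xtil.mulVec θ i) ^ 2
        = ∑ i, (u i - (P *ᵥ u) i) ^ 2 :=
          Finset.sum_congr rfl fun i _ => by rw [h1 i]
      _ ≤ ∑ i, (u i) ^ 2 := key u
      _ = ∑ i, (y i - f i) ^ 2 :=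
          Finset.sum_congr rfl fun i _ => by rw [h2 i]
  calc ∑ i, (y i - (y - ytil + Xtil.mulVec θhat) i) ^ 2
          + lam * ∑ j, |D.mulVec (y - ytil + Xtil.mulVec θhat) j|
      = ∑ i, (ytil i - Xtil.mulVec θhat i) ^ 2 + lam * ∑ j, |θhat j| := step1
    _ ≤ ∑ i, (ytil i - Xtil.mulVec θ i) ^ 2 + lam * ∑ j, |θ j| := hθhat θ
    _ ≤ ∑ i, (y i - f i) ^ 2 + lam * ∑ j, |θ j| := by linarith [step2]
    _ = ∑ i, (y i - f i) ^ 2 + lam * ∑ j, |D.mulVec f j| := rfl
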